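/- Let Ω be a nonempty bounded open convex subset of ℝ³, let x ∈ Ω with d₀ = dist(x,∂Ω) > 0, let ζ₁, ζ₂ ∈ ℝ³∖{0}, set P₁ = p(x,ζ₁), P₂ = p(x,ζ₂), and let θ be the angle between ζ₁ and ζ₂. Then there is a constant C₇ depending only on Ω such that |P₁ − P₂| ≤ C₇(1+d₀⁻¹)θ and | |x−P₁| − |x−P₂| | ≤ C₇(1+d₀⁻¹)θ. -/

import Mathlib

open MeasureTheory Real Set
open scoped ENNReal NNReal

noncomputable section

/-- Three-dimensional Euclidean space. -/
abbrev E3 : Type := EuclideanSpace ℝ (Fin 3)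

/-- Backward exit time: `τ₋(x,ζ) = sup{t ≥ 0 : x - sζ ∈ Ω for all s ∈ [0,t)}`. -/
def tauMinus (Ω : Set E3) (x ζ : E3) : ℝ :=
  sSup {t : ℝ | 0 ≤ t ∧ ∀ s ∈ Set.Ico (0 : ℝ) t, x - s • ζ ∈ Ω}

/-- Backward exit point: `p(x,ζ) = x - τ₋(x,ζ) ζ`. -/
def exitPoint (Ω : Set E3) (x ζ : E3) : E3 := x - tauMinus Ω x ζ • ζ

/-- The incoming boundary set `Γ₋`. -/
def GammaMinus (Ω : Set E3) : Set (E3 × E3) :=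
  {z | z.1 ∈ frontier Ω ∧ ∃ t : ℝ, 0 < t ∧ z.1 + t • z.2 ∈ Ω}

/-- Collision frequency `ν(ζ) = β₀ ∫ e^{-|η|²} |η-ζ|^γ dη`. -/
def nu (γ β₀ : ℝ) (ζ : E3) : ℝ :=
  β₀ * ∫ η : E3, Real.exp (-‖η‖ ^ 2) * ‖η - ζ‖ ^ γ

/-- The Grad-type pointwise bound (1.9) on the collision kernel `k`. -/
def KernelBound (γ δ C₁ : ℝ) (k : E3 → E3 → ℝ) : Prop :=
  ∀ ζ ζs : E3, ζ ≠ ζs →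
    |k ζ ζs| ≤ C₁ * ‖ζ - ζs‖⁻¹ * (1 + ‖ζ‖ + ‖ζs‖) ^ (-(1 - γ)) *
      Real.exp (-((1 - δ) / 4) *
        (‖ζ - ζs‖ ^ 2 + ((‖ζ‖ ^ 2 - ‖ζs‖ ^ 2) / ‖ζ - ζs‖) ^ 2))

/-- The gradient bound (1.10) on the collision kernel `k` (first-variable gradient),
together with differentiability of `k (·, ζ⁎)`. -/
def KernelGradBound (γ δ C₂ : ℝ) (k : E3 → E3 → ℝ) : Prop :=
  (∀ ζs : E3, Differentiable ℝ fun ζ => k ζ ζs) ∧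
  ∀ ζ ζs : E3, ζ ≠ ζs →
    ‖fderiv ℝ (fun w => k w ζs) ζ‖ ≤
      C₂ * (1 + ‖ζ‖) * (‖ζ - ζs‖ ^ 2)⁻¹ * (1 + ‖ζ‖ + ‖ζs‖) ^ (-(1 - γ)) *
        Real.exp (-((1 - δ) / 4) *
          (‖ζ - ζs‖ ^ 2 + ((‖ζ‖ ^ 2 - ‖ζs‖ ^ 2) / ‖ζ - ζs‖) ^ 2))

/-- The integral operator `K(f)(x,ζ) = ∫ k(ζ,ζ⁎) f(x,ζ⁎) dζ⁎`. -/
def Kop (k : E3 → E3 → ℝ) (f : E3 → E3 → ℝ) (x ζ : E3) : ℝ :=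
  ∫ ζs : E3, k ζ ζs * f x ζs

/-- `f` is a mild solution of the stationary linearized Boltzmann equation:
it satisfies the exponential (Duhamel) integral form along backward characteristics,
a.e. on `Ω × ℝ³`. -/
def MildSolution (Ω : Set E3) (γ β₀ : ℝ) (k f : E3 → E3 → ℝ) : Prop :=
  ∀ᵐ z : E3 × E3, z.1 ∈ Ω →
    f z.1 z.2 =
      f (exitPoint Ω z.1 z.2) z.2 * Real.exp (-(nu γ β₀ z.2) * tauMinus Ω z.1 z.2) +
      ∫ s in (0 : ℝ)..(tauMinus Ω z.1 z.2),
        Real.exp (-(nu γ β₀ z.2) * s) * Kop k f (z.1 - s • z.2) z.2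

/-- The function `G` from the mixture lemma, written as an integral over space
and speed:
`G(x₀,ζ) = ∫₀^∞ ∫_Ω k(ζ, ρ(x₀−y)/|x₀−y|) e^{−ν(ρ)|x₀−y|/ρ} K(f)(y, ρ(x₀−y)/|x₀−y|) ρ|x₀−y|⁻² dy dρ`. -/
def Gfun (Ω : Set E3) (γ β₀ : ℝ) (k f : E3 → E3 → ℝ) (x₀ ζ : E3) : ℝ :=
  ∫ ρ in Set.Ioi (0 : ℝ), ∫ y in Ω,
    k ζ ((ρ / ‖x₀ - y‖) • (x₀ - y)) *
      Real.exp (-(nu γ β₀ ((ρ / ‖x₀ - y‖) • (x₀ - y))) * (‖x₀ - y‖ / ρ)) *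
      Kop k f y ((ρ / ‖x₀ - y‖) • (x₀ - y)) * (ρ / ‖x₀ - y‖ ^ 2)

/-- The term `III(x,ζ) = ∫₀^{τ₋(x,ζ)} e^{−ν(ζ)s} G(x−ζs, ζ) ds`. -/
def IIIfun (Ω : Set E3) (γ β₀ : ℝ) (k f : E3 → E3 → ℝ) (x ζ : E3) : ℝ :=
  ∫ s in (0 : ℝ)..(tauMinus Ω x ζ),
    Real.exp (-(nu γ β₀ ζ) * s) * Gfun Ω γ β₀ k f (x - s • ζ) ζ

/-- The damped transport of boundary data: `I(x,ζ) = g(p(x,ζ),ζ) e^{−ν(ζ)τ₋(x,ζ)}`. -/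
def Ifun (Ω : Set E3) (γ β₀ : ℝ) (g : E3 → E3 → ℝ) (x ζ : E3) : ℝ :=
  g (exitPoint Ω x ζ) ζ * Real.exp (-(nu γ β₀ ζ) * tauMinus Ω x ζ)

/-- The twice-iterated boundary term
`II(x,ζ) = ∫₀^{τ₋(x,ζ)} ∫ e^{−ν(ζ)s} k(ζ,ζ′) e^{−ν(ζ′)τ₋(x−ζs,ζ′)} g(p(x−ζs,ζ′),ζ′) dζ′ ds`. -/
def IIfun (Ω : Set E3) (γ β₀ : ℝ) (k g : E3 → E3 → ℝ) (x ζ : E3) : ℝ :=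
  ∫ s in (0 : ℝ)..(tauMinus Ω x ζ), ∫ ζ' : E3,
    Real.exp (-(nu γ β₀ ζ) * s) * k ζ ζ' *
      Real.exp (-(nu γ β₀ ζ') * tauMinus Ω (x - s • ζ) ζ') *
      g (exitPoint Ω (x - s • ζ) ζ') ζ'

/-!
Write `P = x - r • ω` with `ω = ζ / ‖ζ‖` and `r = ‖x - P‖ ≤ diam Ω`. The ball `B(x, d₀)` lies in
the convex set `Ω` and `P₁ ∈ closure Ω`, so for `r₂ < r₁` convexity puts the ball of radius
`(1 - r₂ / r₁) d₀` around `x - r₂ • ω₁` inside `Ω`. As `P₂ = x - r₂ • ω₂ ∉ Ω` lies at distance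
`r₂ ‖ω₁ - ω₂‖` from that centre, `(r₁ - r₂) d₀ ≤ r₁ r₂ ‖ω₁ - ω₂‖ ≤ (diam Ω)² ‖ω₁ - ω₂‖`. Both
estimates follow, because the chord `‖ω₁ - ω₂‖` is at most the angle `θ`.
-/

open Metric InnerProductGeometry

section Angle

variable {V : Type*} [NormedAddCommGroup V] [InnerProductSpace ℝ V]

theorem norm_sub_le_angle_of_norm_eq_one {u v : V} (hu : ‖u‖ = 1) (hv : ‖v‖ = 1) :
    ‖u - v‖ ≤ angle u v := by
  have hinner : inner ℝ u v = Real.cos (angle u v) := by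
    rw [cos_angle, hu, hv, mul_one, div_one]
  have hsq : ‖u - v‖ ^ 2 = 2 - 2 * Real.cos (angle u v) := by
    rw [norm_sub_sq_real, hu, hv, hinner]; ring
  nlinarith [Real.one_sub_sq_div_two_le_cos (x := angle u v), angle_nonneg u v,
    norm_nonneg (u - v)]

theorem norm_inv_norm_smul_sub_le_angle {u v : V} (hu : u ≠ 0) (hv : v ≠ 0) :
    ‖‖u‖⁻¹ • u - ‖v‖⁻¹ • v‖ ≤ angle u v := by
  have hu' : 0 < ‖u‖⁻¹ := inv_pos.mpr (norm_pos_iff.mpr hu)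
  have hv' : 0 < ‖v‖⁻¹ := inv_pos.mpr (norm_pos_iff.mpr hv)
  rw [← angle_smul_left_of_pos u v hu', ← angle_smul_right_of_pos _ v hv']
  exact norm_sub_le_angle_of_norm_eq_one (norm_smul_inv_norm hu) (norm_smul_inv_norm hv)

end Angle

section Convex

variable {E : Type*} [NormedAddCommGroup E] [NormedSpace ℝ E]

theorem Metric.ball_infDist_frontier_subset [FiniteDimensional ℝ E] {s : Set E} {x : E}
    (hx : x ∈ s) : ball x (infDist x (frontier s)) ⊆ s := by
  rcases eq_or_ne s univ with rfl | hs
  · exact subset_univ _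
  obtain ⟨y, hy, hxy⟩ := exists_mem_frontier_infDist_compl_eq_dist hx hs
  refine (ball_subset_ball ?_).trans ball_infDist_compl_subset
  rw [hxy]
  exact infDist_le_dist_of_mem hy

theorem Convex.sub_mul_le_of_ball_subset {s : Set E} (hs : Convex ℝ s) {x u₁ u₂ : E}
    {d r₁ r₂ : ℝ} (hball : ball x d ⊆ s) (hd : 0 ≤ d) (hr₁ : 0 ≤ r₁) (hr₂ : 0 ≤ r₂)
    (h₁ : x - r₁ • u₁ ∈ closure s) (h₂ : x - r₂ • u₂ ∉ s) :
    (r₁ - r₂) * d ≤ r₁ * r₂ * ‖u₁ - u₂‖ := by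
  rcases le_or_gt r₁ r₂ with hle | hlt
  · exact (mul_nonpos_of_nonpos_of_nonneg (sub_nonpos.mpr hle) hd).trans (by positivity)
  by_contra! hcon
  have hr₁pos : 0 < r₁ := hr₂.trans_lt hlt
  set b := 1 - r₂ / r₁
  have hb : b = (r₁ - r₂) / r₁ := by rw [sub_div, div_self hr₁pos.ne']
  have hbpos : 0 < b := by rw [hb]; exact div_pos (by linarith) hr₁pos
  set w := x + (r₂ / b) • (u₁ - u₂)
  have hw : w ∈ interior s := by
    refine interior_maximal hball isOpen_ball ?_
    rw [mem_ball, dist_eq_norm, add_sub_cancel_left, norm_smul, Real.norm_of_nonneg (by positivity),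
      div_mul_eq_mul_div, div_lt_iff₀ hbpos, hb, mul_div_assoc', lt_div_iff₀ hr₁pos]
    linarith
  have hcombo : (r₂ / r₁) • (x - r₁ • u₁) + b • w = x - r₂ • u₂ := by
    simp only [w, smul_add, smul_sub, smul_smul, mul_div_cancel₀ _ hbpos.ne',
      div_mul_cancel₀ _ hr₁pos.ne']
    module
  exact h₂ (interior_subset (hcombo ▸ hs.combo_closure_interior_mem_interior h₁ hw
    (by positivity) hbpos (by ring)))

theorem Convex.abs_sub_mul_le_of_ball_subset {s : Set E} (hs : Convex ℝ s) {x u₁ u₂ : E}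
    {d r₁ r₂ : ℝ} (hball : ball x d ⊆ s) (hd : 0 ≤ d) (hr₁ : 0 ≤ r₁) (hr₂ : 0 ≤ r₂)
    (h₁ : x - r₁ • u₁ ∈ closure s \ s) (h₂ : x - r₂ • u₂ ∈ closure s \ s) :
    |r₁ - r₂| * d ≤ r₁ * r₂ * ‖u₁ - u₂‖ := by
  have h₁₂ := hs.sub_mul_le_of_ball_subset hball hd hr₁ hr₂ h₁.1 h₂.2
  have h₂₁ := hs.sub_mul_le_of_ball_subset hball hd hr₂ hr₁ h₂.1 h₁.2
  rw [norm_sub_rev, mul_comm r₂] at h₂₁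
  rcases le_total r₂ r₁ with h | h
  · rwa [abs_of_nonneg (sub_nonneg.mpr h)]
  · rwa [abs_of_nonpos (sub_nonpos.mpr h), neg_sub]

theorem norm_sub_smul_sub_sub_smul_le {x u₁ u₂ : E} (hu₁ : ‖u₁‖ = 1) {r₁ r₂ : ℝ} (hr₂ : 0 ≤ r₂) :
    ‖(x - r₁ • u₁) - (x - r₂ • u₂)‖ ≤ |r₁ - r₂| + r₂ * ‖u₁ - u₂‖ := by
  have : (x - r₁ • u₁) - (x - r₂ • u₂) = (r₂ - r₁) • u₁ - r₂ • (u₁ - u₂) := by module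
  rw [this]
  refine (norm_sub_le _ _).trans_eq ?_
  rw [norm_smul, norm_smul, hu₁, mul_one, Real.norm_eq_abs, Real.norm_of_nonneg hr₂, abs_sub_comm]

end Convex

section ExitPoint

variable {Ω : Set E3} {x ζ : E3}

theorem tauMinus_nonneg : 0 ≤ tauMinus Ω x ζ :=
  Real.sSup_nonneg fun _ ht => ht.1

theorem sub_smul_mem_of_lt_tauMinus {s : ℝ} (hs₀ : 0 ≤ s) (hs : s < tauMinus Ω x ζ) :
    x - s • ζ ∈ Ω := by
  have hne : {t : ℝ | 0 ≤ t ∧ ∀ s ∈ Ico 0 t, x - s • ζ ∈ Ω}.Nonempty :=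
    ⟨0, le_rfl, fun s hs => absurd hs.2 hs.1.not_gt⟩
  obtain ⟨t, ht, hst⟩ := exists_lt_of_lt_csSup hne hs
  exact ht.2 s ⟨hs₀, hst⟩

theorem le_tauMinus (hbd : Bornology.IsBounded Ω) (hζ : ζ ≠ 0) {t : ℝ} (ht₀ : 0 ≤ t)
    (ht : ∀ s ∈ Ico 0 t, x - s • ζ ∈ Ω) : t ≤ tauMinus Ω x ζ := by
  refine le_csSup ⟨2 * diam Ω / ‖ζ‖, fun u ⟨hu₀, hu⟩ => ?_⟩ ⟨ht₀, ht⟩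
  rcases hu₀.eq_or_lt with rfl | hupos
  · positivity
  have hdist := dist_le_diam_of_mem hbd (hu 0 ⟨le_rfl, hupos⟩)
    (hu (u / 2) ⟨by positivity, by linarith⟩)
  rw [dist_eq_norm, zero_smul, sub_zero, sub_sub_cancel, norm_smul,
    Real.norm_of_nonneg (by positivity)] at hdist
  rw [le_div_iff₀ (norm_pos_iff.mpr hζ)]
  linarith

theorem exitPoint_notMem (hbd : Bornology.IsBounded Ω) (hop : IsOpen Ω) (hζ : ζ ≠ 0) :
    exitPoint Ω x ζ ∉ Ω := by
  intro hP
  obtain ⟨ε, hε, hball⟩ := isOpen_iff.mp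
    (hop.preimage (by fun_prop : Continuous fun s : ℝ => x - s • ζ)) _ hP
  have hseg : ∀ s ∈ Ico 0 (tauMinus Ω x ζ + ε), x - s • ζ ∈ Ω := fun s hs => by
    rcases lt_or_ge s (tauMinus Ω x ζ) with hlt | hge
    · exact sub_smul_mem_of_lt_tauMinus hs.1 hlt
    · exact hball (by rw [Real.ball_eq_Ioo]; constructor <;> linarith [hs.2])
  linarith [le_tauMinus hbd hζ (add_nonneg tauMinus_nonneg hε.le) hseg]

theorem tauMinus_pos (hbd : Bornology.IsBounded Ω) (hop : IsOpen Ω) (hx : x ∈ Ω) (hζ : ζ ≠ 0) :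
    0 < tauMinus Ω x ζ := by
  obtain ⟨ε, hε, hball⟩ := isOpen_iff.mp
    (hop.preimage (by fun_prop : Continuous fun s : ℝ => x - s • ζ)) 0 (by simpa using hx)
  refine hε.trans_le (le_tauMinus hbd hζ hε.le fun s hs => hball ?_)
  rw [Real.ball_eq_Ioo]
  constructor <;> linarith [hs.1, hs.2]

theorem exitPoint_mem_closure (hbd : Bornology.IsBounded Ω) (hop : IsOpen Ω) (hx : x ∈ Ω)
    (hζ : ζ ≠ 0) : exitPoint Ω x ζ ∈ closure Ω := by
  refine mem_closure_of_tendsto (b := nhdsWithin (tauMinus Ω x ζ) (Iio (tauMinus Ω x ζ)))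
    (((by fun_prop : Continuous fun s : ℝ => x - s • ζ).tendsto _).mono_left nhdsWithin_le_nhds) ?_
  filter_upwards [Ioo_mem_nhdsLT (tauMinus_pos hbd hop hx hζ)] with s hs
  exact sub_smul_mem_of_lt_tauMinus hs.1.le hs.2

theorem norm_sub_exitPoint_le_diam (hbd : Bornology.IsBounded Ω) (hop : IsOpen Ω) (hx : x ∈ Ω)
    (hζ : ζ ≠ 0) : ‖x - exitPoint Ω x ζ‖ ≤ diam Ω := by
  rw [← dist_eq_norm, ← diam_closure]
  exact dist_le_diam_of_mem hbd.closure (subset_closure hx) (exitPoint_mem_closure hbd hop hx hζ)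

theorem exitPoint_eq_sub_norm_smul (hζ : ζ ≠ 0) :
    exitPoint Ω x ζ = x - ‖x - exitPoint Ω x ζ‖ • (‖ζ‖⁻¹ • ζ) := by
  have hζ' : ‖ζ‖ ≠ 0 := norm_ne_zero_iff.mpr hζ
  rw [exitPoint, sub_sub_cancel, norm_smul, Real.norm_of_nonneg tauMinus_nonneg, smul_smul,
    mul_assoc, mul_inv_cancel₀ hζ', mul_one]

variable {ζ₁ ζ₂ : E3}

theorem abs_norm_sub_exitPoint_sub_le (hbd : Bornology.IsBounded Ω) (hop : IsOpen Ω)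
    (hconv : Convex ℝ Ω) (hx : x ∈ Ω) (hd₀ : 0 < infDist x (frontier Ω)) (hζ₁ : ζ₁ ≠ 0)
    (hζ₂ : ζ₂ ≠ 0) :
    |‖x - exitPoint Ω x ζ₁‖ - ‖x - exitPoint Ω x ζ₂‖| ≤
      diam Ω ^ 2 / infDist x (frontier Ω) * ‖‖ζ₁‖⁻¹ • ζ₁ - ‖ζ₂‖⁻¹ • ζ₂‖ := by
  have hmem₁ : exitPoint Ω x ζ₁ ∈ closure Ω \ Ω :=
    ⟨exitPoint_mem_closure hbd hop hx hζ₁, exitPoint_notMem hbd hop hζ₁⟩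
  have hmem₂ : exitPoint Ω x ζ₂ ∈ closure Ω \ Ω :=
    ⟨exitPoint_mem_closure hbd hop hx hζ₂, exitPoint_notMem hbd hop hζ₂⟩
  rw [exitPoint_eq_sub_norm_smul hζ₁] at hmem₁
  rw [exitPoint_eq_sub_norm_smul hζ₂] at hmem₂
  have h := hconv.abs_sub_mul_le_of_ball_subset (ball_infDist_frontier_subset hx) hd₀.le
    (norm_nonneg _) (norm_nonneg _) hmem₁ hmem₂
  rw [div_mul_eq_mul_div, le_div_iff₀ hd₀, sq]
  exact h.trans (by gcongr <;> exact norm_sub_exitPoint_le_diam hbd hop hx ‹_›)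

theorem norm_exitPoint_sub_exitPoint_le (hbd : Bornology.IsBounded Ω) (hop : IsOpen Ω)
    (hx : x ∈ Ω) (hζ₁ : ζ₁ ≠ 0) (hζ₂ : ζ₂ ≠ 0) :
    ‖exitPoint Ω x ζ₁ - exitPoint Ω x ζ₂‖ ≤
      |‖x - exitPoint Ω x ζ₁‖ - ‖x - exitPoint Ω x ζ₂‖| +
        diam Ω * ‖‖ζ₁‖⁻¹ • ζ₁ - ‖ζ₂‖⁻¹ • ζ₂‖ := by
  conv_lhs => rw [exitPoint_eq_sub_norm_smul hζ₁, exitPoint_eq_sub_norm_smul hζ₂]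
  have hω₁ : ‖‖ζ₁‖⁻¹ • ζ₁‖ = 1 := norm_smul_inv_norm hζ₁
  refine (norm_sub_smul_sub_sub_smul_le hω₁ (norm_nonneg _)).trans ?_
  gcongr
  exact norm_sub_exitPoint_le_diam hbd hop hx hζ₂

end ExitPoint

theorem stmt_8_general (Ω : Set E3) (hbd : Bornology.IsBounded Ω)
    (hop : IsOpen Ω) (hconv : Convex ℝ Ω) :
    ∃ C₇ : ℝ, 0 < C₇ ∧ ∀ x ∈ Ω, 0 < Metric.infDist x (frontier Ω) →
      ∀ ζ₁ ζ₂ : E3, ζ₁ ≠ 0 → ζ₂ ≠ 0 →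
        ‖exitPoint Ω x ζ₁ - exitPoint Ω x ζ₂‖ ≤
          C₇ * (1 + (Metric.infDist x (frontier Ω))⁻¹) *
            InnerProductGeometry.angle ζ₁ ζ₂ ∧
        |‖x - exitPoint Ω x ζ₁‖ - ‖x - exitPoint Ω x ζ₂‖| ≤
          C₇ * (1 + (Metric.infDist x (frontier Ω))⁻¹) *
            InnerProductGeometry.angle ζ₁ ζ₂ := by
  have hD : 0 ≤ diam Ω := diam_nonneg
  refine ⟨diam Ω ^ 2 + diam Ω + 1, by positivity, fun x hx hd₀ ζ₁ ζ₂ hζ₁ hζ₂ => ?_⟩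
  have hr := abs_norm_sub_exitPoint_sub_le hbd hop hconv hx hd₀ hζ₁ hζ₂
  have hP := norm_exitPoint_sub_exitPoint_le hbd hop hx hζ₁ hζ₂
  set D := diam Ω
  set d₀ := infDist x (frontier Ω)
  set Δ := ‖‖ζ₁‖⁻¹ • ζ₁ - ‖ζ₂‖⁻¹ • ζ₂‖
  have hΔ : 0 ≤ Δ := norm_nonneg _
  have hC : (D ^ 2 / d₀ + D) * Δ ≤ (D ^ 2 + D + 1) * (1 + d₀⁻¹) * angle ζ₁ ζ₂ := by
    have : D ^ 2 / d₀ + D ≤ (D ^ 2 + D + 1) * (1 + d₀⁻¹) := by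
      rw [div_eq_mul_inv]; nlinarith [inv_pos.mpr hd₀]
    exact mul_le_mul this (norm_inv_norm_smul_sub_le_angle hζ₁ hζ₂) hΔ (by positivity)
  refine ⟨hP.trans (le_trans ?_ hC), hr.trans (le_trans ?_ hC)⟩ <;> rw [add_mul]
  · linarith
  · linarith [mul_nonneg hD hΔ]

/-- Continuity of the exit point and exit distance in the velocity direction
(Proposition 3.3). -/
theorem stmt_8 (Ω : Set E3) (hne : Ω.Nonempty) (hbd : Bornology.IsBounded Ω)
    (hop : IsOpen Ω) (hconv : Convex ℝ Ω) :
    ∃ C₇ : ℝ, 0 < C₇ ∧ ∀ x ∈ Ω, 0 < Metric.infDist x (frontier Ω) →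
      ∀ ζ₁ ζ₂ : E3, ζ₁ ≠ 0 → ζ₂ ≠ 0 →
        ‖exitPoint Ω x ζ₁ - exitPoint Ω x ζ₂‖ ≤
          C₇ * (1 + (Metric.infDist x (frontier Ω))⁻¹) *
            InnerProductGeometry.angle ζ₁ ζ₂ ∧
        |‖x - exitPoint Ω x ζ₁‖ - ‖x - exitPoint Ω x ζ₂‖| ≤
          C₇ * (1 + (Metric.infDist x (frontier Ω))⁻¹) *
            InnerProductGeometry.angle ζ₁ ζ₂ :=
  stmt_8_general Ω hbd hop hconv
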